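/- arXiv:2404.04705 — 3 statements merged into one kernel-verified Lean document; each statement's English description precedes it below -/
import Mathlib

section
/- There is a group isomorphism ψ : BS(n,n) → F_n ⋊ ℤ satisfying ψ(a) = x₀ and ψ(b) = y, where F_n ⋊ ℤ denotes the group with presentation ⟨x_0, …, x_{n−1}, y ∣ y⁻¹ x_i y = x_{[i+1]} (0 ≤ i ≤ n−1)⟩, indices read modulo n. -/
/-!
Send `a ↦ x₀`, `b ↦ y` and, backwards, `xᵢ ↦ b⁻ⁱ a bⁱ`, `y ↦ b`. The relation of `BS(n,n)` says
exactly that `bⁿ` commutes with `a`, so `b⁻ⁱ a bⁱ` only depends on `i` modulo `n`, which is what the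
relations `y⁻¹ xᵢ y = x_{[i+1]}` need; conversely these relations give `y⁻ⁿ x₀ yⁿ = x₀`. Both
composites fix the generators, hence are the identity.
-/

/-- The defining relation of `BS(n,n)`: `a⁻¹ bⁿ a = bⁿ` (with `a` = `true`, `b` = `false`). -/
def bsRels (n : ℕ) : Set (FreeGroup Bool) :=
  {(FreeGroup.of true)⁻¹ * FreeGroup.of false ^ n * FreeGroup.of true *
    (FreeGroup.of false ^ n)⁻¹}

/-- The Baumslag–Solitar group `BS(n,n) = ⟨a, b ∣ a⁻¹ bⁿ a = bⁿ⟩`. -/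
abbrev BS (n : ℕ) := PresentedGroup (bsRels n)

/-- The generator `a` of `BS(n,n)`. -/
def bsa (n : ℕ) : BS n := PresentedGroup.of true

/-- The generator `b` of `BS(n,n)`. -/
def bsb (n : ℕ) : BS n := PresentedGroup.of false

/-- The defining relations of `F_n ⋊ ℤ = ⟨x_0, …, x_{n-1}, y ∣ y⁻¹ xᵢ y = x_{[i+1]}⟩`,
with `xᵢ` = `Sum.inl i` and `y` = `Sum.inr ()`, indices read modulo `n`. -/
def sdRels (n : ℕ) [NeZero n] : Set (FreeGroup (Fin n ⊕ Unit)) :=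
  ⋃ i : Fin n,
    {(FreeGroup.of (Sum.inr ()))⁻¹ * FreeGroup.of (Sum.inl i) * FreeGroup.of (Sum.inr ()) *
      (FreeGroup.of (Sum.inl (i + 1)))⁻¹}

open Fin.NatCast

section Conjugation

variable {G : Type*} [Group G]

theorem conj_pow_eq_of_conj_eq {n : ℕ} [NeZero n] {x : Fin n → G} {y : G}
    (h : ∀ i, y⁻¹ * x i * y = x (i + 1)) (i : Fin n) (k : ℕ) :
    (y ^ k)⁻¹ * x i * y ^ k = x (i + k) := by
  induction k with
  | zero => simp
  | succ k ih =>
    calc (y ^ (k + 1))⁻¹ * x i * y ^ (k + 1) = y⁻¹ * ((y ^ k)⁻¹ * x i * y ^ k) * y := by group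
      _ = x (i + (k + 1 : ℕ)) := by rw [ih, h, Nat.cast_succ, add_assoc]

theorem conj_pow_mod_eq_of_commute {a b : G} {n : ℕ} (h : Commute a (b ^ n)) (k : ℕ) :
    (b ^ (k % n))⁻¹ * a * b ^ (k % n) = (b ^ k)⁻¹ * a * b ^ k := by
  have hc : ((b ^ n) ^ (k / n))⁻¹ * a * (b ^ n) ^ (k / n) = a := by
    rw [mul_assoc, (h.pow_right _).eq, inv_mul_cancel_left]
  calc (b ^ (k % n))⁻¹ * a * b ^ (k % n)
      = (b ^ (k % n))⁻¹ * (((b ^ n) ^ (k / n))⁻¹ * a * (b ^ n) ^ (k / n)) * b ^ (k % n) := by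
        rw [hc]
    _ = ((b ^ n) ^ (k / n) * b ^ (k % n))⁻¹ * a * ((b ^ n) ^ (k / n) * b ^ (k % n)) := by group
    _ = (b ^ k)⁻¹ * a * b ^ k := by rw [← pow_mul, ← pow_add, Nat.div_add_mod]

end Conjugation

namespace BS

variable (n : ℕ)

theorem commute_bsa_bsb_pow : Commute (bsa n) (bsb n ^ n) := by
  have h : (bsa n)⁻¹ * bsb n ^ n * bsa n = bsb n ^ n := by
    simpa [bsa, bsb, PresentedGroup.of] using
      PresentedGroup.mk_eq_mk_of_mul_inv_mem (rels := bsRels n) rfl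
  calc bsa n * bsb n ^ n = bsa n * ((bsa n)⁻¹ * bsb n ^ n * bsa n) := by rw [h]
    _ = bsb n ^ n * bsa n := by group

end BS

namespace SD

variable (n : ℕ) [NeZero n]

abbrev x (i : Fin n) : PresentedGroup (sdRels n) := PresentedGroup.of (Sum.inl i)

abbrev y : PresentedGroup (sdRels n) := PresentedGroup.of (Sum.inr ())

theorem y_inv_mul_x_mul_y (i : Fin n) : (y n)⁻¹ * x n i * y n = x n (i + 1) := by
  simpa [PresentedGroup.of] using PresentedGroup.mk_eq_mk_of_mul_inv_mem (rels := sdRels n)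
    (Set.mem_iUnion.2 ⟨i, rfl⟩)

theorem y_pow_inv_mul_x_zero_mul_y_pow (k : ℕ) : (y n ^ k)⁻¹ * x n 0 * y n ^ k = x n k := by
  simpa using conj_pow_eq_of_conj_eq (y_inv_mul_x_mul_y n) 0 k

theorem commute_x_zero_y_pow : Commute (x n 0) (y n ^ n) := by
  have h := y_pow_inv_mul_x_zero_mul_y_pow n n
  rw [Fin.natCast_self, mul_assoc, inv_mul_eq_iff_eq_mul] at h
  exact h

end SD

section Isomorphism

variable (n : ℕ) [NeZero n]

def bsToSdGen : Bool → PresentedGroup (sdRels n)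
  | true => SD.x n 0
  | false => SD.y n

def bsToSd : BS n →* PresentedGroup (sdRels n) :=
  PresentedGroup.toGroup (f := bsToSdGen n) <| by
    rintro r rfl
    simp only [map_mul, map_inv, map_pow, FreeGroup.lift_apply_of, bsToSdGen]
    rw [mul_inv_eq_one, mul_assoc, ← (SD.commute_x_zero_y_pow n).eq, inv_mul_cancel_left]

theorem bsToSd_bsa : bsToSd n (bsa n) = SD.x n 0 := PresentedGroup.toGroup.of _

theorem bsToSd_bsb : bsToSd n (bsb n) = SD.y n := PresentedGroup.toGroup.of _

def sdToBsGen : Fin n ⊕ Unit → BS n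
  | Sum.inl i => (bsb n ^ (i : ℕ))⁻¹ * bsa n * bsb n ^ (i : ℕ)
  | Sum.inr () => bsb n

theorem bsb_inv_mul_sdToBsGen_mul_bsb (i : Fin n) :
    (bsb n)⁻¹ * sdToBsGen n (Sum.inl i) * bsb n = sdToBsGen n (Sum.inl (i + 1)) := by
  have hval : ((i + 1 : Fin n) : ℕ) = ((i : ℕ) + 1) % n := by
    rw [Fin.val_add, Fin.val_one', Nat.add_mod_mod]
  rw [sdToBsGen, sdToBsGen, hval, conj_pow_mod_eq_of_commute (BS.commute_bsa_bsb_pow n)]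
  group

def sdToBs : PresentedGroup (sdRels n) →* BS n :=
  PresentedGroup.toGroup (f := sdToBsGen n) <| by
    intro r hr
    obtain ⟨i, rfl⟩ := Set.mem_iUnion.1 hr
    simp only [map_mul, map_inv, FreeGroup.lift_apply_of, mul_inv_eq_one]
    exact bsb_inv_mul_sdToBsGen_mul_bsb n i

theorem sdToBs_comp_bsToSd : (sdToBs n).comp (bsToSd n) = MonoidHom.id (BS n) := by
  apply PresentedGroup.ext
  rintro (_ | _) <;> simp [bsToSd, sdToBs, bsToSdGen, sdToBsGen, bsa, bsb]

theorem bsToSd_comp_sdToBs :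
    (bsToSd n).comp (sdToBs n) = MonoidHom.id (PresentedGroup (sdRels n)) := by
  apply PresentedGroup.ext
  rintro (i | ⟨⟩)
  · simpa [sdToBs, sdToBsGen, bsToSd_bsa, bsToSd_bsb] using
      SD.y_pow_inv_mul_x_zero_mul_y_pow n i
  · simp [sdToBs, sdToBsGen, bsToSd_bsb]

end Isomorphism

theorem statement_4_general (n : ℕ) [NeZero n] :
    ∃ ψ : BS n ≃* PresentedGroup (sdRels n),
      ψ (bsa n) = PresentedGroup.of (Sum.inl 0) ∧
      ψ (bsb n) = PresentedGroup.of (Sum.inr ()) :=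
  ⟨(bsToSd n).toMulEquiv (sdToBs n) (sdToBs_comp_bsToSd n) (bsToSd_comp_sdToBs n),
    bsToSd_bsa n, bsToSd_bsb n⟩

/-- There is an isomorphism `ψ : BS(n,n) → F_n ⋊ ℤ` with `ψ(a) = x₀` and `ψ(b) = y`. -/
theorem statement_4 (n : ℕ) (hn : 2 ≤ n) [NeZero n] :
    ∃ ψ : BS n ≃* PresentedGroup (sdRels n),
      ψ (bsa n) = PresentedGroup.of (Sum.inl 0) ∧
      ψ (bsb n) = PresentedGroup.of (Sum.inr ()) :=
  statement_4_general n
end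

section
/- For all i ∈ {0, …, n−1} and r ∈ {1, −1}: if ε_x r = 1 then φ⁻¹(x_i^{r}) = x_{[ε_y i]}^{ε_x r} y^{−ε_x ε_y r d} in G, and if ε_x r = −1 then φ⁻¹(x_i^{r}) = x_{[ε_y (i−d)]}^{ε_x r} y^{−ε_x ε_y r d} in G. -/
open Fin.CommRing

/-- The shift automorphism `Φ_s` of the free group `F_n`, sending `x_i` to `x_{[i-s]}`
(indices read modulo `n`). -/
def Phi (n : ℕ) [NeZero n] (s : ℤ) : FreeGroup (Fin n) ≃* FreeGroup (Fin n) :=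
  FreeGroup.freeGroupCongr (Equiv.subRight ((s : Fin n)))

/-- The action of `ℤ` on `F_n` by shifting: `t` acts as `Φ_t`. -/
def shiftAction (n : ℕ) [NeZero n] : Multiplicative ℤ →* MulAut (FreeGroup (Fin n)) :=
  zpowersHom (MulAut (FreeGroup (Fin n))) (Phi n 1)

/-- The group `G = F_n ⋊ ℤ`, in which `y⁻¹ xᵢ y = x_{[i+1]}`.  Every element is uniquely
`g₁ yᵗ` with `g₁ ∈ F_n` (the free component, `SemidirectProduct.left`) and `t ∈ ℤ`. -/
abbrev GSD (n : ℕ) [NeZero n] :=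
  SemidirectProduct (FreeGroup (Fin n)) (Multiplicative ℤ) (shiftAction n)

/-- The embedding of the free component `F_n` into `G`. -/
def fg (n : ℕ) [NeZero n] (w : FreeGroup (Fin n)) : GSD n := SemidirectProduct.inl w

/-- The generator `x_i` of `G`. -/
def xg (n : ℕ) [NeZero n] (i : Fin n) : GSD n := fg n (FreeGroup.of i)

/-- The generator `y` of `G`. -/
def yg (n : ℕ) [NeZero n] : GSD n := SemidirectProduct.inr (Multiplicative.ofAdd 1)

/-- The exponent sum of an element of the free group: image under the homomorphism
sending every generator to `1 ∈ ℤ`. -/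
def expSum (n : ℕ) (w : FreeGroup (Fin n)) : ℤ :=
  Multiplicative.toAdd (FreeGroup.lift (fun _ => Multiplicative.ofAdd (1 : ℤ)) w)

/-! Every automorphism with `φ x₀ = x₀^{ε_x} y^d` and `φ y = y^{ε_y}` sends
`x_j = y^{-j} x₀ y^j` to `x_{[ε_y j]}^{ε_x} y^d`, because `y^d` commutes with `y^{ε_y j}`.
Applying `φ` to the two claimed preimages and using `ε_y² = 1` then returns `x_i^{±ε_x}`; in the
case `ε_x r = -1` the factor `y^d` has to be conjugated past `x`, which shifts the index by `d`. -/

namespace GSD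

variable {n : ℕ} [NeZero n]

@[simp]
lemma Phi_apply_of (s : ℤ) (i : Fin n) : Phi n s (FreeGroup.of i) = FreeGroup.of (i - s) := by
  simp [Phi]

lemma Phi_add (s t : ℤ) : Phi n (s + t) = Phi n s * Phi n t := by
  refine MulEquiv.toMonoidHom_injective (FreeGroup.ext_hom _ _ fun i => ?_)
  simp only [MulEquiv.coe_toMonoidHom, MulAut.mul_apply, Phi_apply_of, Int.cast_add]
  ring_nf

lemma Phi_one_zpow (t : ℤ) : Phi n 1 ^ t = Phi n t := by
  induction t using Int.induction_on with
  | zero =>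
    rw [zpow_zero]
    exact MulEquiv.toMonoidHom_injective (FreeGroup.ext_hom _ _ fun i => by simp)
  | succ k ih => rw [zpow_add_one, ih, ← Phi_add]
  | pred k ih => rw [zpow_sub_one, ih, mul_inv_eq_iff_eq_mul, ← Phi_add, sub_add_cancel]

lemma yg_zpow (t : ℤ) : yg n ^ t = SemidirectProduct.inr (Multiplicative.ofAdd t) := by
  rw [yg, ← map_zpow, ← ofAdd_zsmul, smul_eq_mul, mul_one]

lemma yg_zpow_mul_xg_mul_yg_zpow_neg (t : ℤ) (i : Fin n) :
    yg n ^ t * xg n i * yg n ^ (-t) = xg n (i - t) := by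
  rw [yg_zpow, yg_zpow, ofAdd_neg, xg, fg, ← SemidirectProduct.inl_aut]
  simp only [shiftAction, zpowersHom_apply, toAdd_ofAdd, Phi_one_zpow, Phi_apply_of, xg, fg]
  rfl

lemma yg_zpow_neg_mul_xg_zpow_mul_yg_zpow (t : ℤ) (i : Fin n) (e : ℤ) :
    yg n ^ (-t) * xg n i ^ e * yg n ^ t = xg n (i + t) ^ e := by
  have h := yg_zpow_mul_xg_mul_yg_zpow_neg (-t) i
  rw [neg_neg, Int.cast_neg, sub_neg_eq_add] at h
  have hy : yg n ^ t = (yg n ^ (-t))⁻¹ := by rw [zpow_neg, inv_inv]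
  rw [← h, hy, conj_zpow]

section Automorphism

variable {F : Type*} [FunLike F (GSD n) (GSD n)] [MonoidHomClass F (GSD n) (GSD n)]
  {εx εy d : ℤ} (φ : F) (hφx : φ (xg n 0) = xg n 0 ^ εx * yg n ^ d)
  (hφy : φ (yg n) = yg n ^ εy)

include hφx hφy

lemma map_xg (j : Fin n) : φ (xg n j) = xg n (εy * j) ^ εx * yg n ^ d := by
  have hj : xg n j = yg n ^ (-(j : ℤ)) * xg n 0 ^ (1 : ℤ) * yg n ^ (j : ℤ) := by
    rw [yg_zpow_neg_mul_xg_zpow_mul_yg_zpow, zpow_one, zero_add, Int.cast_natCast,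
      Fin.cast_val_eq_self]
  have hεyj : (εy : Fin n) * j = 0 + ((εy * j : ℤ) : Fin n) := by
    rw [zero_add, Int.cast_mul, Int.cast_natCast, Fin.cast_val_eq_self]
  rw [hj, zpow_one, map_mul, map_mul, map_zpow, map_zpow, hφx, hφy, ← zpow_mul, ← zpow_mul,
    hεyj, ← yg_zpow_neg_mul_xg_zpow_mul_yg_zpow, mul_neg]
  simp only [mul_assoc, ← zpow_add, add_comm d]

variable (hεy : εy * εy = 1)
include hεy

lemma map_xg_mul_yg_zpow (i : Fin n) :
    φ (xg n (εy * i) * yg n ^ (-(εy * d))) = xg n i ^ εx := by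
  have hεy' : (εy : Fin n) * (εy * i) = i := by
    rw [← mul_assoc, ← Int.cast_mul, hεy, Int.cast_one, one_mul]
  rw [map_mul, map_zpow, map_xg φ hφx hφy, hφy, hεy', ← zpow_mul, mul_assoc, ← zpow_add,
    show d + εy * -(εy * d) = 0 by linear_combination (-d) * hεy, zpow_zero, mul_one]

lemma map_xg_inv_mul_yg_zpow (i : Fin n) :
    φ ((xg n (εy * (i - (d : Fin n))))⁻¹ * yg n ^ (εy * d)) = (xg n i ^ εx)⁻¹ := by
  have hεy' : (εy : Fin n) * (εy * (i - d)) = i - d := by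
    rw [← mul_assoc, ← Int.cast_mul, hεy, Int.cast_one, one_mul]
  have hconj := yg_zpow_neg_mul_xg_zpow_mul_yg_zpow d (i - (d : Fin n)) (-εx)
  rw [sub_add_cancel] at hconj
  rw [map_mul, map_inv, map_zpow, map_xg φ hφx hφy, hφy, hεy', ← zpow_mul,
    show εy * (εy * d) = d by linear_combination d * hεy, ← zpow_neg, ← hconj, mul_inv_rev,
    ← zpow_neg, ← zpow_neg]

end Automorphism

end GSD

open GSD in
theorem statement_7_general (n : ℕ) [NeZero n] (εx εy d : ℤ)
    (hεx : εx = 1 ∨ εx = -1) (hεy : εy = 1 ∨ εy = -1)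
    (φ : GSD n ≃* GSD n) (hφx : φ (xg n 0) = xg n 0 ^ εx * yg n ^ d)
    (hφy : φ (yg n) = yg n ^ εy) (i : Fin n) (r : ℤ) :
    (εx * r = 1 →
      φ.symm (xg n i ^ r) = xg n ((εy : Fin n) * i) ^ (εx * r) * yg n ^ (-(εx * εy * r * d))) ∧
    (εx * r = -1 →
      φ.symm (xg n i ^ r) =
        xg n ((εy : Fin n) * (i - (d : Fin n))) ^ (εx * r) * yg n ^ (-(εx * εy * r * d))) := by
  have hεy2 : εy * εy = 1 := by rcases hεy with rfl | rfl <;> rfl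
  refine ⟨fun h => ?_, fun h => ?_⟩
  · obtain rfl : εx = r := by rcases hεx with rfl | rfl <;> omega
    rw [MulEquiv.symm_apply_eq, h, zpow_one, show εx * εy * εx * d = εy * d by
      linear_combination εy * d * h, map_xg_mul_yg_zpow φ hφx hφy hεy2]
  · obtain rfl : r = -εx := by rcases hεx with rfl | rfl <;> omega
    rw [MulEquiv.symm_apply_eq, h, zpow_neg_one, show -(εx * εy * -εx * d) = εy * d by
      linear_combination -(εy * d) * h, map_xg_inv_mul_yg_zpow φ hφx hφy hεy2, zpow_neg]

/-- For all `i` and `r = ±1`: if `ε_x r = 1` then `φ⁻¹(xᵢʳ) = x_{[ε_y i]}^{ε_x r} y^{-ε_x ε_y r d}`,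
and if `ε_x r = -1` then `φ⁻¹(xᵢʳ) = x_{[ε_y (i-d)]}^{ε_x r} y^{-ε_x ε_y r d}`. -/
theorem statement_7 (n : ℕ) (hn : 2 ≤ n) [NeZero n] (εx εy d : ℤ)
    (hεx : εx = 1 ∨ εx = -1) (hεy : εy = 1 ∨ εy = -1)
    (φ : GSD n ≃* GSD n) (hφx : φ (xg n 0) = xg n 0 ^ εx * yg n ^ d)
    (hφy : φ (yg n) = yg n ^ εy) (i : Fin n) (r : ℤ) (hr : r = 1 ∨ r = -1) :
    (εx * r = 1 →
      φ.symm (xg n i ^ r) = xg n ((εy : Fin n) * i) ^ (εx * r) * yg n ^ (-(εx * εy * r * d))) ∧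
    (εx * r = -1 →
      φ.symm (xg n i ^ r) =
        xg n ((εy : Fin n) * (i - (d : Fin n))) ^ (εx * r) * yg n ^ (-(εx * εy * r * d))) :=
  statement_7_general n εx εy d hεx hεy φ hφx hφy i r
end

section
/- For all s ∈ ℤ, all i ∈ {0, …, n−1} and all r ∈ {1, −1}: (i) Φ_s(φ_F(x_i^{r})) = φ_F(Φ_{ε_y s}(x_i^{r})) and Φ_s(φ⁻¹_F(x_i^{r})) = φ⁻¹_F(Φ_{ε_y s}(x_i^{r})) in F_n; (ii) φ⁻¹(φ_F(x_i^{r})) = x_i^{r} y^{−ε_y r d} in G; (iii) φ(φ⁻¹_F(x_i^{r})) = x_i^{r} y^{ε_x r d} in G. -/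
/-!
Conjugation by `y^t` acts on the free factor as `Φ_t`, so `x_j = y^{-j} x_0 y^j` and therefore
`φ(x_j) = x_{[ε_y j]}^{ε_x} y^d` and `φ(x_j)⁻¹ = x_{[ε_y j + d]}^{-ε_x} y^{-d}`.
Parts (ii) and (iii) follow from these two formulas by cancelling powers of `y`, using
`ε_x² = ε_y² = 1`; part (i) is the index identity `ε_y i - s = ε_y (i - ε_y s)` in `ℤ/n`.
-/

open Fin.CommRing

/-- `phiF n εx εy d i r` is `φ_F(x_i^r)` for `r ∈ {1, -1}`:
`φ_F(x_i) = x_{[ε_y i]}^{ε_x}` and `φ_F(x_i⁻¹) = x_{[ε_y i + d]}^{-ε_x}`. -/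
def phiF (n : ℕ) [NeZero n] (εx εy d : ℤ) (i : Fin n) (r : ℤ) : FreeGroup (Fin n) :=
  if r = 1 then (FreeGroup.of ((εy : Fin n) * i)) ^ εx
  else (FreeGroup.of ((εy : Fin n) * i + (d : Fin n))) ^ (-εx)

/-- `phiFInv n εx εy d i r` is `φ⁻¹_F(x_i^r)` for `r ∈ {1, -1}`:
`φ⁻¹_F(x_i^r) = x_{[ε_y i]}` if `ε_x r = 1` and `φ⁻¹_F(x_i^r) = x_{[ε_y (i-d)]}⁻¹` if `ε_x r = -1`. -/
def phiFInv (n : ℕ) [NeZero n] (εx εy d : ℤ) (i : Fin n) (r : ℤ) : FreeGroup (Fin n) :=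
  if εx * r = 1 then FreeGroup.of ((εy : Fin n) * i)
  else (FreeGroup.of ((εy : Fin n) * (i - (d : Fin n))))⁻¹

section Shift

variable {n : ℕ} [NeZero n]

lemma Phi_of (s : ℤ) (j : Fin n) : Phi n s (FreeGroup.of j) = FreeGroup.of (j - (s : Fin n)) := by
  simp [Phi]

lemma Phi_zero : Phi n 0 = 1 :=
  MulEquiv.toMonoidHom_injective <| FreeGroup.ext_hom _ _ fun j => by simp [Phi_of]

lemma Phi_add (a b : ℤ) : Phi n (a + b) = Phi n a * Phi n b :=
  MulEquiv.toMonoidHom_injective <| FreeGroup.ext_hom _ _ fun j => by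
    simp [Phi_of, sub_sub, add_comm]

def PhiHom (n : ℕ) [NeZero n] : Multiplicative ℤ →* MulAut (FreeGroup (Fin n)) where
  toFun t := Phi n t.toAdd
  map_one' := Phi_zero
  map_mul' a b := Phi_add a.toAdd b.toAdd

lemma shiftAction_ofAdd (t : ℤ) : shiftAction n (Multiplicative.ofAdd t) = Phi n t := by
  have h : shiftAction n = PhiHom n := MonoidHom.ext_mint (by simp [shiftAction, PhiHom])
  rw [h]
  rfl

end Shift

section SemidirectProduct

variable {n : ℕ} [NeZero n]

lemma fg_zpow (w : FreeGroup (Fin n)) (e : ℤ) : fg n (w ^ e) = fg n w ^ e :=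
  map_zpow SemidirectProduct.inl w e

lemma fg_inv (w : FreeGroup (Fin n)) : fg n w⁻¹ = (fg n w)⁻¹ :=
  map_inv SemidirectProduct.inl w

lemma yg_zpow (t : ℤ) : yg n ^ t = SemidirectProduct.inr (Multiplicative.ofAdd t) := by
  rw [yg, ← map_zpow, ← ofAdd_zsmul, smul_eq_mul, mul_one]

lemma yg_zpow_mul_fg (t : ℤ) (w : FreeGroup (Fin n)) :
    yg n ^ t * fg n w = fg n (Phi n t w) * yg n ^ t := by
  rw [fg, fg, yg_zpow, ← shiftAction_ofAdd, SemidirectProduct.inl_aut, map_inv,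
    inv_mul_cancel_right]

lemma xg_eq_conj (j : Fin n) : xg n j = yg n ^ (-(j : ℤ)) * xg n 0 * yg n ^ (j : ℤ) := by
  rw [xg, xg, yg_zpow_mul_fg, mul_assoc, ← zpow_add, neg_add_cancel, zpow_zero, mul_one, Phi_of]
  simp

lemma zpow_neg_mul_fg_mul_zpow (t u : ℤ) (w : FreeGroup (Fin n)) :
    yg n ^ (-t) * (fg n w * yg n ^ u) * yg n ^ t = fg n (Phi n (-t) w) * yg n ^ u := by
  rw [← mul_assoc, yg_zpow_mul_fg, mul_assoc, mul_assoc, ← zpow_add, ← zpow_add,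
    neg_add_cancel_comm_assoc]

end SemidirectProduct

lemma intCast_mul_self_eq_one {R : Type*} [Ring R] {e : ℤ} (he : e * e = 1) :
    (e : R) * e = 1 := by
  rw [← Int.cast_mul, he, Int.cast_one]

section Automorphism

variable {n : ℕ} [NeZero n] {εx εy d : ℤ} {φ : GSD n ≃* GSD n}

lemma map_xg (hφx : φ (xg n 0) = xg n 0 ^ εx * yg n ^ d) (hφy : φ (yg n) = yg n ^ εy)
    (j : Fin n) : φ (xg n j) = fg n (FreeGroup.of ((εy : Fin n) * j) ^ εx) * yg n ^ d := by
  rw [xg_eq_conj, map_mul, map_mul, map_zpow, map_zpow, hφx, hφy, ← zpow_mul, ← zpow_mul,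
    mul_neg, xg, ← fg_zpow, zpow_neg_mul_fg_mul_zpow, map_zpow, Phi_of]
  simp

lemma map_xg_inv (hφx : φ (xg n 0) = xg n 0 ^ εx * yg n ^ d) (hφy : φ (yg n) = yg n ^ εy)
    (j : Fin n) :
    (φ (xg n j))⁻¹ =
      fg n (FreeGroup.of ((εy : Fin n) * j + (d : Fin n)) ^ (-εx)) * yg n ^ (-d) := by
  rw [map_xg hφx hφy, mul_inv_rev, ← zpow_neg, ← fg_inv, yg_zpow_mul_fg, map_inv,
    map_zpow, Phi_of, ← zpow_neg]
  simp

lemma Phi_phiF (hεy : εy * εy = 1) (s : ℤ) (i : Fin n) (r : ℤ) :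
    Phi n s (phiF n εx εy d i r) = phiF n εx εy d (i - ((εy * s : ℤ) : Fin n)) r := by
  unfold phiF
  split_ifs <;> rw [map_zpow, Phi_of] <;> congr 2 <;> push_cast <;>
    linear_combination (s : Fin n) * intCast_mul_self_eq_one (R := Fin n) hεy

lemma Phi_phiFInv (hεy : εy * εy = 1) (s : ℤ) (i : Fin n) (r : ℤ) :
    Phi n s (phiFInv n εx εy d i r) = phiFInv n εx εy d (i - ((εy * s : ℤ) : Fin n)) r := by
  unfold phiFInv
  split_ifs
  · rw [Phi_of]
    congr 1
    push_cast
    linear_combination (s : Fin n) * intCast_mul_self_eq_one (R := Fin n) hεy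
  · rw [map_inv, Phi_of]
    congr 2
    push_cast
    linear_combination (s : Fin n) * intCast_mul_self_eq_one (R := Fin n) hεy

lemma symm_fg_phiF_one (hεy : εy * εy = 1) (hφx : φ (xg n 0) = xg n 0 ^ εx * yg n ^ d)
    (hφy : φ (yg n) = yg n ^ εy) (i : Fin n) :
    φ.symm (fg n (phiF n εx εy d i 1)) = xg n i ^ (1 : ℤ) * yg n ^ (-(εy * 1 * d)) := by
  have hd : d + εy * -(εy * 1 * d) = 0 := by linear_combination (-d) * hεy
  rw [MulEquiv.symm_apply_eq, map_mul, map_zpow, map_zpow, hφy, zpow_one, map_xg hφx hφy,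
    mul_assoc, ← zpow_mul, ← zpow_add, hd, zpow_zero, mul_one, phiF, if_pos rfl]

lemma symm_fg_phiF_neg_one (hεy : εy * εy = 1) (hφx : φ (xg n 0) = xg n 0 ^ εx * yg n ^ d)
    (hφy : φ (yg n) = yg n ^ εy) (i : Fin n) :
    φ.symm (fg n (phiF n εx εy d i (-1))) = xg n i ^ (-1 : ℤ) * yg n ^ (-(εy * -1 * d)) := by
  have hd : -d + εy * -(εy * -1 * d) = 0 := by linear_combination d * hεy
  rw [MulEquiv.symm_apply_eq, map_mul, map_zpow, map_zpow, hφy, zpow_neg_one,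
    map_xg_inv hφx hφy, mul_assoc, ← zpow_mul, ← zpow_add, hd, zpow_zero, mul_one, phiF,
    if_neg (by norm_num)]

lemma map_fg_phiFInv_of_mul_eq_one (hεy : εy * εy = 1)
    (hφx : φ (xg n 0) = xg n 0 ^ εx * yg n ^ d) (hφy : φ (yg n) = yg n ^ εy) (i : Fin n)
    {r : ℤ} (h : εx * r = 1) :
    φ (fg n (phiFInv n εx εy d i r)) = xg n i ^ r * yg n ^ (εx * r * d) := by
  obtain rfl : r = εx := by
    obtain ⟨rfl, rfl⟩ | ⟨rfl, rfl⟩ := Int.eq_one_or_neg_one_of_mul_eq_one' h <;> rfl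
  rw [phiFInv, if_pos h, ← xg, map_xg hφx hφy, ← mul_assoc,
    intCast_mul_self_eq_one hεy, one_mul, h, one_mul, fg_zpow, xg]

lemma map_fg_phiFInv_of_eq_neg (hεx : εx * εx = 1) (hεy : εy * εy = 1)
    (hφx : φ (xg n 0) = xg n 0 ^ εx * yg n ^ d) (hφy : φ (yg n) = yg n ^ εy) (i : Fin n)
    {r : ℤ} (h : r = -εx) :
    φ (fg n (phiFInv n εx εy d i r)) = xg n i ^ r * yg n ^ (εx * r * d) := by
  subst h
  have hd : εx * -εx * d = -d := by linear_combination (-d) * hεx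
  rw [phiFInv, if_neg (by rw [mul_neg, hεx]; decide), fg_inv, ← xg, map_inv,
    map_xg_inv hφx hφy, ← mul_assoc, intCast_mul_self_eq_one hεy, one_mul, sub_add_cancel, hd,
    fg_zpow, xg]

end Automorphism

theorem statement_8_general (n : ℕ) [NeZero n] (εx εy d : ℤ)
    (hεx : εx = 1 ∨ εx = -1) (hεy : εy = 1 ∨ εy = -1)
    (φ : GSD n ≃* GSD n) (hφx : φ (xg n 0) = xg n 0 ^ εx * yg n ^ d)
    (hφy : φ (yg n) = yg n ^ εy) (s : ℤ) (i : Fin n) (r : ℤ) (hr : r = 1 ∨ r = -1) :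
    (Phi n s (phiF n εx εy d i r) = phiF n εx εy d (i - ((εy * s : ℤ) : Fin n)) r ∧
      Phi n s (phiFInv n εx εy d i r) = phiFInv n εx εy d (i - ((εy * s : ℤ) : Fin n)) r) ∧
    φ.symm (fg n (phiF n εx εy d i r)) = xg n i ^ r * yg n ^ (-(εy * r * d)) ∧
    φ (fg n (phiFInv n εx εy d i r)) = xg n i ^ r * yg n ^ (εx * r * d) := by
  have hεx2 : εx * εx = 1 := by rcases hεx with rfl | rfl <;> rfl
  have hεy2 : εy * εy = 1 := by rcases hεy with rfl | rfl <;> rfl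
  refine ⟨⟨Phi_phiF hεy2 s i r, Phi_phiFInv hεy2 s i r⟩, ?_, ?_⟩
  · rcases hr with rfl | rfl
    · exact symm_fg_phiF_one hεy2 hφx hφy i
    · exact symm_fg_phiF_neg_one hεy2 hφx hφy i
  · by_cases h : εx * r = 1
    · exact map_fg_phiFInv_of_mul_eq_one hεy2 hφx hφy i h
    · have hr' : r = -εx := by rcases hεx with rfl | rfl <;> omega
      exact map_fg_phiFInv_of_eq_neg hεx2 hεy2 hφx hφy i hr'

/-- For all `s ∈ ℤ`, `i` and `r = ±1`:
(i) `Φ_s(φ_F(xᵢʳ)) = φ_F(Φ_{ε_y s}(xᵢʳ))` and `Φ_s(φ⁻¹_F(xᵢʳ)) = φ⁻¹_F(Φ_{ε_y s}(xᵢʳ))`;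
(ii) `φ⁻¹(φ_F(xᵢʳ)) = xᵢʳ y^{-ε_y r d}`;
(iii) `φ(φ⁻¹_F(xᵢʳ)) = xᵢʳ y^{ε_x r d}`. -/
theorem statement_8 (n : ℕ) (hn : 2 ≤ n) [NeZero n] (εx εy d : ℤ)
    (hεx : εx = 1 ∨ εx = -1) (hεy : εy = 1 ∨ εy = -1)
    (φ : GSD n ≃* GSD n) (hφx : φ (xg n 0) = xg n 0 ^ εx * yg n ^ d)
    (hφy : φ (yg n) = yg n ^ εy) (s : ℤ) (i : Fin n) (r : ℤ) (hr : r = 1 ∨ r = -1) :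
    (Phi n s (phiF n εx εy d i r) = phiF n εx εy d (i - ((εy * s : ℤ) : Fin n)) r ∧
      Phi n s (phiFInv n εx εy d i r) = phiFInv n εx εy d (i - ((εy * s : ℤ) : Fin n)) r) ∧
    φ.symm (fg n (phiF n εx εy d i r)) = xg n i ^ r * yg n ^ (-(εy * r * d)) ∧
    φ (fg n (phiFInv n εx εy d i r)) = xg n i ^ r * yg n ^ (εx * r * d) :=
  statement_8_general n εx εy d hεx hεy φ hφx hφy s i r hr
end
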